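/- For $\theta \in [0,1]$ and $k \geq 1$, with $A_{k,1}(\theta) = \frac{2^{k-1}(k-1)!}{\prod_{j=k}^{2k-1}(j+\theta)}$ and $A_{k,1} = \frac{2^k k!(k-1)!}{(2k)!}$, we have $|A_{k,1}(\theta) - A_{k,1}| \leq \theta A_{k,1}$. -/

import Mathlib

open Finset

/-- `A_{k,1}(θ) = 2^{k-1}(k-1)! / ((k+θ)(k+1+θ)⋯(2k-1+θ))`. -/
noncomputable def Aone (k : ℕ) (θ : ℝ) : ℝ :=
  (2 : ℝ) ^ (k - 1) * (Nat.factorial (k - 1) : ℝ) /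
    ∏ j ∈ Finset.Ico k (2 * k), ((j : ℝ) + θ)

/-- `A_{k,1} = 2^k k!(k-1)!/(2k)!`. -/
noncomputable def AoneZero (k : ℕ) : ℝ :=
  (2 : ℝ) ^ k * (Nat.factorial k : ℝ) * (Nat.factorial (k - 1) : ℝ) /
    (Nat.factorial (2 * k) : ℝ)

/-!
Since `A_{k,1} = A_{k,1}(0)`, we have `A_{k,1}(θ) = A_{k,1} ∏_{j=k}^{2k-1} j/(j+θ)`. Each factor is
`1 - θ/(j+θ)` with `θ/(j+θ) ≤ θ/j ≤ θ/k`, so by the Weierstrass product inequality the product lies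
in `[1 - θ, 1]`.
-/

open scoped Nat

theorem Finset.one_sub_sum_le_prod_one_sub {ι R : Type*} [CommRing R] [LinearOrder R]
    [IsStrictOrderedRing R] (s : Finset ι) {f : ι → R} (h0 : ∀ i ∈ s, 0 ≤ f i)
    (h1 : ∀ i ∈ s, f i ≤ 1) : 1 - ∑ i ∈ s, f i ≤ ∏ i ∈ s, (1 - f i) := by
  classical
  induction s using Finset.induction_on with
  | empty => simp
  | insert a s ha ih =>
    rw [prod_insert ha, sum_insert ha]
    have hfa0 := h0 a (mem_insert_self a s)
    have hfa1 := h1 a (mem_insert_self a s)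
    have ih := ih (fun i hi => h0 i (mem_insert_of_mem hi))
      (fun i hi => h1 i (mem_insert_of_mem hi))
    have hs : 0 ≤ ∑ i ∈ s, f i := sum_nonneg fun i hi => h0 i (mem_insert_of_mem hi)
    nlinarith [mul_le_mul_of_nonneg_left ih (sub_nonneg.2 hfa1)]

theorem one_sub_le_prod_div_add {ι : Type*} (s : Finset ι) {x : ι → ℝ} (hx : ∀ i ∈ s, 0 < x i)
    (hsum : ∑ i ∈ s, (x i)⁻¹ ≤ 1) {θ : ℝ} (hθ : 0 ≤ θ) :
    1 - θ ≤ ∏ i ∈ s, x i / (x i + θ) := by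
  have hterm : ∀ i ∈ s, x i / (x i + θ) = 1 - θ / (x i + θ) := fun i hi => by
    have := hx i hi
    field_simp
    ring
  have hle : ∀ i ∈ s, θ / (x i + θ) ≤ θ * (x i)⁻¹ := fun i hi => by
    have := hx i hi
    rw [← div_eq_mul_inv]
    exact div_le_div_of_nonneg_left hθ this (by linarith)
  calc 1 - θ ≤ 1 - θ * ∑ i ∈ s, (x i)⁻¹ := by nlinarith
    _ ≤ 1 - ∑ i ∈ s, θ / (x i + θ) := by
      rw [mul_sum]
      exact sub_le_sub_left (sum_le_sum hle) 1
    _ ≤ ∏ i ∈ s, (1 - θ / (x i + θ)) :=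
      s.one_sub_sum_le_prod_one_sub (fun i hi => by have := hx i hi; positivity)
        (fun i hi => by have := hx i hi; rw [div_le_one (by linarith)]; linarith)
    _ = ∏ i ∈ s, x i / (x i + θ) := (prod_congr rfl hterm).symm

theorem prod_div_add_le_one {ι : Type*} (s : Finset ι) {x : ι → ℝ} (hx : ∀ i ∈ s, 0 < x i)
    {θ : ℝ} (hθ : 0 ≤ θ) : ∏ i ∈ s, x i / (x i + θ) ≤ 1 :=
  prod_le_one (fun i hi => by have := hx i hi; positivity)
    fun i hi => by have := hx i hi; rw [div_le_one (by linarith)]; linarith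

theorem Nat.factorial_mul_prod_Ico {m n : ℕ} (h : m ≤ n) :
    m ! * ∏ j ∈ Ico (m + 1) (n + 1), j = n ! := by
  rw [← prod_Ico_id_eq_factorial, ← prod_Ico_id_eq_factorial,
    ← prod_Ico_consecutive _ (by omega : 1 ≤ m + 1) (by omega : m + 1 ≤ n + 1)]

theorem cast_pos_of_mem_Ico_two_mul {k j : ℕ} (hj : j ∈ Ico k (2 * k)) : (0 : ℝ) < j :=
  Nat.cast_pos.2 (by grind)

theorem sum_inv_Ico_two_mul_le_one (k : ℕ) : ∑ j ∈ Ico k (2 * k), (j : ℝ)⁻¹ ≤ 1 := by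
  calc ∑ j ∈ Ico k (2 * k), (j : ℝ)⁻¹ ≤ ∑ _j ∈ Ico k (2 * k), (k : ℝ)⁻¹ :=
        sum_le_sum fun j hj => by
          have hkj := (mem_Ico.1 hj).1
          have hk : 0 < k := by grind
          gcongr
    _ = k * (k : ℝ)⁻¹ := by simp [show 2 * k - k = k by omega]
    _ ≤ 1 := mul_inv_le_one

theorem Aone_zero {k : ℕ} (hk : 1 ≤ k) : Aone k 0 = AoneZero k := by
  obtain ⟨n, rfl⟩ := Nat.exists_eq_add_of_le' hk
  have hP := Nat.factorial_mul_prod_Ico (show n ≤ 2 * n + 1 by omega)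
  rw [show 2 * n + 1 + 1 = 2 * (n + 1) by ring] at hP
  have hfac : (2 * (n + 1))! = (2 * n + 2) * (2 * n + 1)! := Nat.factorial_succ _
  simp only [Aone, AoneZero, add_zero, Nat.add_sub_cancel, Nat.factorial_succ n]
  rw [hfac, ← hP]
  push_cast
  have : (0 : ℝ) < ∏ j ∈ Ico (n + 1) (2 * (n + 1)), (j : ℝ) :=
    prod_pos fun _ => cast_pos_of_mem_Ico_two_mul
  field_simp
  ring

theorem Aone_eq_mul_prod {k : ℕ} {θ : ℝ} (hθ : 0 ≤ θ) :
    Aone k θ = Aone k 0 * ∏ j ∈ Ico k (2 * k), (j : ℝ) / (j + θ) := by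
  have hj : ∀ j ∈ Ico k (2 * k), (0 : ℝ) < j := fun _ => cast_pos_of_mem_Ico_two_mul
  have hP0 : (0 : ℝ) < ∏ j ∈ Ico k (2 * k), (j : ℝ) := prod_pos hj
  have hPθ : (0 : ℝ) < ∏ j ∈ Ico k (2 * k), ((j : ℝ) + θ) :=
    prod_pos fun j hj' => by linarith [hj j hj']
  simp only [Aone, add_zero, prod_div_distrib]
  field_simp

/-- For `θ ∈ [0,1]` and `k ≥ 1`, `|A_{k,1}(θ) - A_{k,1}| ≤ θ A_{k,1}`. -/
theorem Aone_lipschitz (k : ℕ) (hk : 1 ≤ k) (θ : ℝ) (hθ : θ ∈ Set.Icc (0 : ℝ) 1) :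
    |Aone k θ - AoneZero k| ≤ θ * AoneZero k := by
  obtain ⟨hθ0, -⟩ := hθ
  have hx : ∀ j ∈ Ico k (2 * k), (0 : ℝ) < j := fun _ => cast_pos_of_mem_Ico_two_mul
  have hr_le := prod_div_add_le_one _ hx hθ0
  have hr_ge := one_sub_le_prod_div_add _ hx (sum_inv_Ico_two_mul_le_one k) hθ0
  have hA : 0 ≤ AoneZero k := by unfold AoneZero; positivity
  rw [Aone_eq_mul_prod hθ0, Aone_zero hk, abs_of_nonpos (by nlinarith)]
  nlinarith
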